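/- Let k be a field, d >= 1, and R = k[x_1, ..., x_d]. If I and J are nonzero monomial ideals of R, then NP(\overline{IJ}) = NP(IJ) = NP(I) + NP(J), where the sum is the Minkowski sum of subsets of \mathbb{R}^d. That is, the Newton polyhedron map I \mapsto NP(I) is a monoid homomorphism from integrally closed monomial ideals under I*J = \overline{IJ} to convex subsets of \mathbb{R}^d under Minkowski addition. -/

import Mathlib

/-- `x` satisfies an equation of integral dependence over the ideal `I`:
`x ^ n + a 1 * x ^ (n-1) + ⋯ + a (n-1) * x + a n = 0` with `a i ∈ I ^ i`. -/
def IsIntegralOverIdeal {A : Type*} [CommRing A] (I : Ideal A) (x : A) : Prop :=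
  ∃ n : ℕ, 0 < n ∧ ∃ a : ℕ → A, (∀ i, 1 ≤ i → i ≤ n → a i ∈ I ^ i) ∧
    x ^ n + ∑ i ∈ Finset.Icc 1 n, a i * x ^ (n - i) = 0

/-- The integral closure `\overline{I}` of an ideal `I`.  The set of elements integral
over `I` is in fact an ideal, so taking the ideal span of this set does not change it. -/
def intCl {A : Type*} [CommRing A] (I : Ideal A) : Ideal A :=
  Ideal.span {x | IsIntegralOverIdeal I x}

open MvPolynomial Pointwise in
/-- A monomial ideal: an ideal generated by a set of monomials `x^α`. -/
def IsMonomialIdeal {k : Type*} [Field k] {d : ℕ} (I : Ideal (MvPolynomial (Fin d) k)) : Prop :=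
  ∃ S : Set (Fin d →₀ ℕ), I = Ideal.span ((fun α => monomial α (1 : k)) '' S)

/-- The exponent set `E(I) = { α ∈ ℕ^d | x^α ∈ I }` of a (monomial) ideal. -/
def expSet {k : Type*} [Field k] {d : ℕ} (I : Ideal (MvPolynomial (Fin d) k)) :
    Set (Fin d →₀ ℕ) :=
  {α | MvPolynomial.monomial α (1 : k) ∈ I}

/-- The natural embedding `ℕ^d → ℝ^d` of exponent vectors. -/
noncomputable def toRd {d : ℕ} (α : Fin d →₀ ℕ) : Fin d → ℝ := fun i => (α i : ℝ)

/-- The Newton polyhedron `NP(I) = conv(E(I)) ⊆ ℝ^d`. -/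
noncomputable def NP {k : Type*} [Field k] {d : ℕ} (I : Ideal (MvPolynomial (Fin d) k)) :
    Set (Fin d → ℝ) :=
  convexHull ℝ (toRd '' expSet I)

/-!
Monomials multiply by adding exponents, so `E(IJ) = E(I) + E(J)` for monomial ideals, and taking
convex hulls gives the Minkowski sum. For the integral closure: `NP(K)` is the convex hull of the
finitely many minimal exponents plus the orthant, hence closed, so by Hahn–Banach it is the
intersection of the half-spaces `c ≤ ⟪w, ·⟫` containing `E(K)`. The least `w`-weight `m` of a
monomial of a polynomial is additive on products, since initial forms multiply in a domain. In an
equation of integral dependence `p ^ n + ∑ aᵢ p ^ (n - i) = 0`, the term of `p ^ n` of weight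
`n * m` must cancel against a term of some `aᵢ p ^ (n - i)`, whose weight is at least
`i * c + (n - i) * m`; hence `c ≤ m`.
-/

open MvPolynomial Pointwise
open Finsupp (weight)

lemma exists_finset_subset_forall_exists_le {α : Type*} [PartialOrder α] [WellQuasiOrderedLE α]
    (E : Set α) : ∃ B : Finset α, ↑B ⊆ E ∧ ∀ γ ∈ E, ∃ β ∈ B, β ≤ γ := by
  have hfin : {β | Minimal (· ∈ E) β}.Finite :=
    WellQuasiOrderedLE.finite_of_isAntichain (setOfPred_minimal_antichain _)
  refine ⟨hfin.toFinset, fun β hβ => (hfin.mem_toFinset.1 hβ).prop, fun γ hγ => ?_⟩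
  obtain ⟨β, hle, hβ⟩ := (Set.isPWO_of_wellQuasiOrderedLE E).exists_le_minimal hγ
  exact ⟨β, hfin.mem_toFinset.2 hβ, hle⟩

lemma le_intCl {A : Type*} [CommRing A] (K : Ideal A) : K ≤ intCl K := fun x hx =>
  Ideal.subset_span ⟨1, one_pos, fun _ => -x, fun i hi hi' => by
    obtain rfl : i = 1 := le_antisymm hi' hi
    simpa using K.neg_mem hx, by simp⟩

section MonomialIdeal

variable {k : Type*} [Field k] {d : ℕ}

lemma mem_expSet_span_monomial_image {S : Set (Fin d →₀ ℕ)} {δ : Fin d →₀ ℕ} :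
    δ ∈ expSet (Ideal.span ((fun α => monomial α (1 : k)) '' S)) ↔ ∃ α ∈ S, α ≤ δ := by
  simp [expSet, mem_ideal_span_monomial_image]

lemma IsMonomialIdeal.mem_iff {K : Ideal (MvPolynomial (Fin d) k)} (hK : IsMonomialIdeal K)
    {p : MvPolynomial (Fin d) k} : p ∈ K ↔ ∀ δ ∈ p.support, δ ∈ expSet K := by
  obtain ⟨S, rfl⟩ := hK
  simp only [mem_ideal_span_monomial_image, mem_expSet_span_monomial_image]

lemma span_monomial_image_mul (S T : Set (Fin d →₀ ℕ)) :
    Ideal.span ((fun α => monomial α (1 : k)) '' S) * Ideal.span ((fun α => monomial α 1) '' T) =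
      Ideal.span ((fun α => monomial α 1) '' (S + T)) := by
  rw [Ideal.span_mul_span', ← Set.image2_mul, ← Set.image2_add, Set.image_image2,
    Set.image2_image_left, Set.image2_image_right]
  simp only [monomial_mul, mul_one]

lemma IsMonomialIdeal.mul {I J : Ideal (MvPolynomial (Fin d) k)}
    (hI : IsMonomialIdeal I) (hJ : IsMonomialIdeal J) : IsMonomialIdeal (I * J) := by
  obtain ⟨S, rfl⟩ := hI
  obtain ⟨T, rfl⟩ := hJ
  exact ⟨S + T, span_monomial_image_mul S T⟩

lemma isMonomialIdeal_top : IsMonomialIdeal (⊤ : Ideal (MvPolynomial (Fin d) k)) :=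
  ⟨{0}, by simp⟩

lemma IsMonomialIdeal.pow {K : Ideal (MvPolynomial (Fin d) k)} (hK : IsMonomialIdeal K)
    (n : ℕ) : IsMonomialIdeal (K ^ n) := by
  induction n with
  | zero => simpa using isMonomialIdeal_top
  | succ n ih => simpa [pow_succ] using ih.mul hK

lemma expSet_mul {I J : Ideal (MvPolynomial (Fin d) k)}
    (hI : IsMonomialIdeal I) (hJ : IsMonomialIdeal J) :
    expSet (I * J) = expSet I + expSet J := by
  obtain ⟨S, rfl⟩ := hI
  obtain ⟨T, rfl⟩ := hJ
  ext δ
  simp only [span_monomial_image_mul, mem_expSet_span_monomial_image, Set.mem_add]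
  constructor
  · rintro ⟨_, ⟨α, hα, β, hβ, rfl⟩, hle⟩
    have hαδ : α ≤ δ := le_self_add.trans hle
    exact ⟨α, ⟨α, hα, le_rfl⟩, δ - α, ⟨β, hβ, le_tsub_of_add_le_left hle⟩,
      add_tsub_cancel_of_le hαδ⟩
  · rintro ⟨_, ⟨α, hα, hαle⟩, _, ⟨β, hβ, hβle⟩, rfl⟩
    exact ⟨α + β, ⟨α, hα, β, hβ, rfl⟩, add_le_add hαle hβle⟩

lemma expSet_mono {I J : Ideal (MvPolynomial (Fin d) k)} (h : I ≤ J) : expSet I ⊆ expSet J :=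
  fun _ hδ => h hδ

lemma expSet_add_mem {K : Ideal (MvPolynomial (Fin d) k)} {α : Fin d →₀ ℕ}
    (hα : α ∈ expSet K) (β : Fin d →₀ ℕ) : α + β ∈ expSet K := by
  have := K.mul_mem_left (monomial β 1) hα
  rwa [monomial_mul, one_mul, add_comm] at this

end MonomialIdeal

section NewtonPolyhedron

variable {k : Type*} [Field k] {d : ℕ}

lemma toRd_add (α β : Fin d →₀ ℕ) : toRd (α + β) = toRd α + toRd β := by
  ext i; simp [toRd]

lemma toRd_single (i : Fin d) (n : ℕ) : toRd (Finsupp.single i n) = Pi.single i (n : ℝ) := by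
  ext j; by_cases h : j = i <;> simp [toRd, h]

lemma toRd_mono {α β : Fin d →₀ ℕ} (h : α ≤ β) : toRd α ≤ toRd β :=
  fun i => Nat.cast_le.2 (h i)

lemma image_toRd_add (S T : Set (Fin d →₀ ℕ)) : toRd '' (S + T) = toRd '' S + toRd '' T :=
  Set.image_add (⟨⟨toRd, by ext; simp [toRd]⟩, toRd_add⟩ : (Fin d →₀ ℕ) →+ (Fin d → ℝ))

variable {K : Ideal (MvPolynomial (Fin d) k)} {x : Fin d → ℝ}

lemma add_natCast_single_mem_NP (hx : x ∈ NP K) (i : Fin d) (n : ℕ) :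
    x + Pi.single i (n : ℝ) ∈ NP K := by
  have hsub : toRd '' expSet K + {Pi.single i (n : ℝ)} ⊆ toRd '' expSet K := by
    rintro _ ⟨_, ⟨α, hα, rfl⟩, _, rfl, rfl⟩
    exact ⟨α + Finsupp.single i n, expSet_add_mem hα _, by rw [toRd_add, toRd_single]⟩
  have := convexHull_mono (𝕜 := ℝ) hsub
  rw [convexHull_add, convexHull_singleton] at this
  exact this (Set.add_mem_add hx rfl)

lemma add_single_mem_NP (hx : x ∈ NP K) (i : Fin d) {t : ℝ} (ht : 0 ≤ t) :
    x + Pi.single i t ∈ NP K := by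
  obtain ⟨n, hn⟩ := exists_nat_gt t
  have hn0 : (0 : ℝ) < n := ht.trans_lt hn
  have := (convex_convexHull ℝ _).add_smul_mem hx (add_natCast_single_mem_NP hx i n)
    (t := t / n) ⟨div_nonneg ht hn0.le, (div_le_one hn0).2 hn.le⟩
  rwa [← Pi.single_smul', smul_eq_mul, div_mul_cancel₀ _ hn0.ne'] at this

lemma add_mem_NP_of_nonneg (hx : x ∈ NP K) {v : Fin d → ℝ} (hv : 0 ≤ v) : x + v ∈ NP K := by
  classical
  rw [← Finset.univ_sum_single v]
  induction (Finset.univ : Finset (Fin d)) using Finset.induction_on generalizing x with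
  | empty => simpa using hx
  | insert i s hi ih =>
    rw [Finset.sum_insert hi, ← add_assoc]
    exact ih (add_single_mem_NP hx i (hv i))

end NewtonPolyhedron

section Separation

variable {k : Type*} [Field k] {d : ℕ}

lemma exists_NP_eq_convexHull_add_Ici (K : Ideal (MvPolynomial (Fin d) k)) :
    ∃ B : Finset (Fin d →₀ ℕ), NP K = convexHull ℝ (toRd '' ↑B) + Set.Ici 0 := by
  obtain ⟨B, hBE, hB⟩ := exists_finset_subset_forall_exists_le (expSet K)
  refine ⟨B, (convexHull_min ?_ ((convex_convexHull ℝ _).add (convex_Ici 0))).antisymm ?_⟩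
  · rintro _ ⟨γ, hγ, rfl⟩
    obtain ⟨β, hβ, hle⟩ := hB γ hγ
    exact ⟨toRd β, subset_convexHull ℝ _ ⟨β, hβ, rfl⟩, toRd γ - toRd β,
      sub_nonneg.2 (toRd_mono hle), add_sub_cancel _ _⟩
  · rintro _ ⟨x, hx, v, hv, rfl⟩
    exact add_mem_NP_of_nonneg (convexHull_mono (Set.image_mono hBE) hx) hv

lemma isClosed_NP (K : Ideal (MvPolynomial (Fin d) k)) : IsClosed (NP K) := by
  obtain ⟨B, hB⟩ := exists_NP_eq_convexHull_add_Ici K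
  rw [hB]
  exact isClosed_Ici.add_left_of_isCompact ((B.finite_toSet.image toRd).isCompact_convexHull ℝ)

lemma weight_eq_apply_toRd {F : Type*} [FunLike F (Fin d → ℝ) ℝ]
    [LinearMapClass F ℝ (Fin d → ℝ) ℝ] (f : F) (δ : Fin d →₀ ℕ) :
    weight (fun i => f (Pi.single i 1)) δ = f (toRd δ) := by
  classical
  rw [Finsupp.weight_apply, Finsupp.sum_fintype _ _ (by simp), pi_eq_sum_univ' (toRd δ), map_sum]
  simp [toRd]

lemma toRd_mem_NP_of_forall_le {K : Ideal (MvPolynomial (Fin d) k)} {δ : Fin d →₀ ℕ}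
    (h : ∀ (w : Fin d → ℝ) (c : ℝ),
      (∀ γ ∈ expSet K, c ≤ weight w γ) → c ≤ weight w δ) :
    toRd δ ∈ NP K := by
  by_contra hδ
  obtain ⟨f, u, hfδ, hf⟩ :=
    geometric_hahn_banach_point_closed (convex_convexHull ℝ _) (isClosed_NP K) hδ
  have := h (fun i => f (Pi.single i 1)) u fun γ hγ => by
    rw [weight_eq_apply_toRd f]
    exact (hf _ (subset_convexHull ℝ _ ⟨γ, hγ, rfl⟩)).le
  rw [weight_eq_apply_toRd f] at this
  exact (hfδ.trans_le this).false

end Separation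

namespace MvPolynomial

variable {σ R : Type*} [CommSemiring R] (w : σ → ℝ)

open Classical in
noncomputable def minWeight (p : MvPolynomial σ R) : ℝ :=
  if hp : p = 0 then 0 else p.support.inf' (support_nonempty.2 hp) (weight w)

noncomputable def initialForm (p : MvPolynomial σ R) : MvPolynomial σ R :=
  weightedHomogeneousComponent w (minWeight w p) p

variable {w} {p q : MvPolynomial σ R}

lemma minWeight_le {δ : σ →₀ ℕ} (hδ : δ ∈ p.support) : minWeight w p ≤ weight w δ := by
  have hp : p ≠ 0 := by rintro rfl; simp at hδ
  rw [minWeight, dif_neg hp]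
  exact Finset.inf'_le _ hδ

lemma le_minWeight (hp : p ≠ 0) {c : ℝ} (h : ∀ δ ∈ p.support, c ≤ weight w δ) :
    c ≤ minWeight w p := by
  rw [minWeight, dif_neg hp]
  exact Finset.le_inf' _ _ h

variable (w) in
lemma exists_weight_eq_minWeight (hp : p ≠ 0) :
    ∃ δ ∈ p.support, weight w δ = minWeight w p := by
  rw [minWeight, dif_neg hp]
  obtain ⟨δ, hδ, h⟩ := Finset.exists_mem_eq_inf' (support_nonempty.2 hp) (weight w)
  exact ⟨δ, hδ, h.symm⟩

lemma coeff_initialForm (δ : σ →₀ ℕ) :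
    (initialForm w p).coeff δ = if weight w δ = minWeight w p then p.coeff δ else 0 := by
  rw [initialForm, coeff_weightedHomogeneousComponent]

variable (w) in
lemma initialForm_ne_zero (hp : p ≠ 0) : initialForm w p ≠ 0 := by
  obtain ⟨δ, hδ, hwδ⟩ := exists_weight_eq_minWeight w hp
  refine ne_zero_iff.2 ⟨δ, ?_⟩
  rwa [coeff_initialForm, if_pos hwδ, ← mem_support_iff]

lemma coeff_mul_eq_coeff_initialForm_mul {δ : σ →₀ ℕ}
    (hδ : weight w δ = minWeight w p + minWeight w q) :
    (p * q).coeff δ = (initialForm w p * initialForm w q).coeff δ := by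
  classical
  rw [coeff_mul, coeff_mul]
  refine Finset.sum_congr rfl fun ⟨a, b⟩ hab => ?_
  rw [Finset.HasAntidiagonal.mem_antidiagonal] at hab
  rw [coeff_initialForm, coeff_initialForm]
  by_cases ha : p.coeff a = 0
  · simp [ha]
  by_cases hb : q.coeff b = 0
  · simp [hb]
  have hwa : minWeight w p ≤ weight w a := minWeight_le (mem_support_iff.2 ha)
  have hwb : minWeight w q ≤ weight w b := minWeight_le (mem_support_iff.2 hb)
  have hsum : weight w a + weight w b = weight w δ := by rw [← map_add, hab]
  rw [if_pos (by linarith), if_pos (by linarith)]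

lemma minWeight_one [Nontrivial R] : minWeight w (1 : MvPolynomial σ R) = 0 := by
  obtain ⟨δ, hδ, hwδ⟩ :=
    exists_weight_eq_minWeight w (one_ne_zero (α := MvPolynomial σ R))
  rw [support_one, Finset.mem_singleton] at hδ
  rw [← hwδ, hδ, map_zero]

variable [NoZeroDivisors R]

variable (w) in
lemma exists_mem_support_mul_weight_eq (hp : p ≠ 0) (hq : q ≠ 0) :
    ∃ δ ∈ (p * q).support, weight w δ = minWeight w p + minWeight w q := by
  obtain ⟨δ, hδ⟩ := support_nonempty.2 (mul_ne_zero (initialForm_ne_zero w hp)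
    (initialForm_ne_zero w hq))
  have hwδ : weight w δ = minWeight w p + minWeight w q :=
    ((weightedHomogeneousComponent_isWeightedHomogeneous _ _).mul
      (weightedHomogeneousComponent_isWeightedHomogeneous _ _)) (mem_support_iff.1 hδ)
  refine ⟨δ, ?_, hwδ⟩
  rw [mem_support_iff, coeff_mul_eq_coeff_initialForm_mul hwδ]
  exact mem_support_iff.1 hδ

lemma minWeight_mul (hp : p ≠ 0) (hq : q ≠ 0) :
    minWeight w (p * q) = minWeight w p + minWeight w q := by
  classical
  refine le_antisymm ?_ (le_minWeight (mul_ne_zero hp hq) fun δ hδ => ?_)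
  · obtain ⟨δ, hδ, hwδ⟩ := exists_mem_support_mul_weight_eq w hp hq
    exact hwδ ▸ minWeight_le hδ
  · obtain ⟨a, ha, b, hb, rfl⟩ := Finset.mem_add.1 (support_mul p q hδ)
    rw [map_add]
    exact add_le_add (minWeight_le ha) (minWeight_le hb)

lemma minWeight_pow [Nontrivial R] (hp : p ≠ 0) (n : ℕ) :
    minWeight w (p ^ n) = n * minWeight w p := by
  induction n with
  | zero => simpa using minWeight_one
  | succ n ih =>
    rw [pow_succ, minWeight_mul (pow_ne_zero n hp) hp, ih]
    push_cast; ring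

end MvPolynomial

section IntegralClosure

variable {k : Type*} [Field k] {d : ℕ} {K : Ideal (MvPolynomial (Fin d) k)} {w : Fin d → ℝ}
  {c : ℝ}

lemma le_weight_of_mem_expSet_pow (hK : IsMonomialIdeal K)
    (hc : ∀ γ ∈ expSet K, c ≤ weight w γ) {i : ℕ} (hi : 1 ≤ i) {γ : Fin d →₀ ℕ}
    (hγ : γ ∈ expSet (K ^ i)) : i * c ≤ weight w γ := by
  induction i, hi using Nat.le_induction generalizing γ with
  | base => simpa using hc γ (by simpa using hγ)
  | succ i hi ih =>
    rw [pow_succ, expSet_mul (hK.pow i) hK] at hγ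
    obtain ⟨α, hα, β, hβ, rfl⟩ := hγ
    rw [map_add]
    push_cast
    linarith [ih hα, hc β hβ]

theorem IsIntegralOverIdeal.le_weight (hK : IsMonomialIdeal K) {p : MvPolynomial (Fin d) k}
    (hp : IsIntegralOverIdeal K p) (hc : ∀ γ ∈ expSet K, c ≤ weight w γ) {δ : Fin d →₀ ℕ}
    (hδ : δ ∈ p.support) : c ≤ weight w δ := by
  have hp0 : p ≠ 0 := by rintro rfl; simp at hδ
  refine le_trans ?_ (minWeight_le hδ)
  obtain ⟨n, -, a, ha, heq⟩ := hp
  set m := minWeight w p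
  obtain ⟨δ', hδ', hwδ'⟩ := exists_weight_eq_minWeight w (pow_ne_zero n hp0)
  rw [minWeight_pow hp0] at hwδ'
  have hsum : (∑ i ∈ Finset.Icc 1 n, a i * p ^ (n - i)).coeff δ' ≠ 0 := by
    rw [eq_neg_of_add_eq_zero_right heq, coeff_neg, neg_ne_zero]
    exact mem_support_iff.1 hδ'
  rw [coeff_sum] at hsum
  obtain ⟨i, hi, hi0⟩ := Finset.exists_ne_zero_of_sum_ne_zero hsum
  obtain ⟨hi1, hin⟩ := Finset.mem_Icc.1 hi
  obtain ⟨γ, hγ, ε, hε, rfl⟩ := Finset.mem_add.1 (support_mul _ _ (mem_support_iff.2 hi0))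
  have hγc : i * c ≤ weight w γ :=
    le_weight_of_mem_expSet_pow hK hc hi1 ((hK.pow i).mem_iff.1 (ha i hi1 hin) γ hγ)
  have hεm : (n - i : ℕ) * m ≤ weight w ε := minWeight_pow hp0 (n - i) ▸ minWeight_le hε
  rw [map_add] at hwδ'
  rw [Nat.cast_sub hin] at hεm
  have hi_pos : (0 : ℝ) < i := by exact_mod_cast hi1
  exact le_of_mul_le_mul_left (by linarith) hi_pos

theorem NP_intCl (hK : IsMonomialIdeal K) : NP (intCl K) = NP K := by
  refine (convexHull_min ?_ (convex_convexHull ℝ _)).antisymm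
    (convexHull_mono (Set.image_mono (expSet_mono (le_intCl K))))
  rintro _ ⟨δ, hδ, rfl⟩
  have hle : intCl K ≤ Ideal.span ((fun α => monomial α (1 : k)) '' (toRd ⁻¹' NP K)) :=
    Ideal.span_le.2 fun p hp => mem_ideal_span_monomial_image.2 fun ε hε =>
      ⟨ε, toRd_mem_NP_of_forall_le fun _ _ hc => hp.le_weight hK hc hε, le_rfl⟩
  obtain ⟨α, hα, hαδ⟩ := mem_expSet_span_monomial_image.1 (expSet_mono hle hδ)
  have := add_mem_NP_of_nonneg hα (sub_nonneg.2 (toRd_mono hαδ))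
  rwa [add_sub_cancel] at this

end IntegralClosure

theorem NP_mul {k : Type*} [Field k] {d : ℕ} {I J : Ideal (MvPolynomial (Fin d) k)}
    (hI : IsMonomialIdeal I) (hJ : IsMonomialIdeal J) : NP (I * J) = NP I + NP J := by
  rw [NP, NP, NP, expSet_mul hI hJ, image_toRd_add, convexHull_add]

open Pointwise in
theorem NP_star_hom_general {k : Type*} [Field k] {d : ℕ}
    (I J : Ideal (MvPolynomial (Fin d) k))
    (hI : IsMonomialIdeal I) (hJ : IsMonomialIdeal J) :
    NP (intCl (I * J)) = NP (I * J) ∧ NP (I * J) = NP I + NP J :=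
  ⟨NP_intCl (hI.mul hJ), NP_mul hI hJ⟩

open Pointwise in
/-- For nonzero monomial ideals, `NP(intCl (IJ)) = NP(IJ) = NP(I) + NP(J)` (Minkowski sum):
the Newton polyhedron is a monoid homomorphism. -/
theorem NP_star_hom {k : Type*} [Field k] {d : ℕ} (hd : 1 ≤ d)
    (I J : Ideal (MvPolynomial (Fin d) k))
    (hI : IsMonomialIdeal I) (hJ : IsMonomialIdeal J)
    (hI0 : I ≠ ⊥) (hJ0 : J ≠ ⊥) :
    NP (intCl (I * J)) = NP (I * J) ∧ NP (I * J) = NP I + NP J :=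
  NP_star_hom_general I J hI hJ
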